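/- In a connected graph, any two distinct edges lying in the same circuit-connected component can be extended to a cut, i.e., there exists a cut containing both edges. -/

import Mathlib

structure Multigraph (V E : Type*) where
  fst : E → V
  snd : E → V

namespace Multigraph

variable {V E : Type*}

/-- The edge `e` joins vertices `u` and `w` (in either orientation). -/
def Joins (G : Multigraph V E) (e : E) (u w : V) : Prop :=
  (G.fst e = u ∧ G.snd e = w) ∨ (G.fst e = w ∧ G.snd e = u)

/-- Reachability, using only edges in `F`. -/
def Reach (G : Multigraph V E) (F : Set E) : V → V → Prop :=
  Relation.EqvGen (fun u w => ∃ e ∈ F, G.Joins e u w)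

/-- A graph is connected if any two vertices are joined by a walk. -/
def Connected (G : Multigraph V E) : Prop := ∀ u w : V, G.Reach Set.univ u w

/-- A cut of a connected graph: a set `c` of edges such that removing `c`
leaves exactly two connected components (`A` and `Aᶜ`), and every edge of `c`
joins these two components. -/
def IsCut (G : Multigraph V E) (c : Set E) : Prop :=
  ∃ A : Set V, A.Nonempty ∧ Aᶜ.Nonempty ∧
    (∀ u w : V, G.Reach cᶜ u w ↔ ((u ∈ A ∧ w ∈ A) ∨ (u ∈ Aᶜ ∧ w ∈ Aᶜ))) ∧
    (∀ e ∈ c, (G.fst e ∈ A ∧ G.snd e ∈ Aᶜ) ∨ (G.fst e ∈ Aᶜ ∧ G.snd e ∈ A))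

/-- A circuit: a cyclic sequence of pairwise distinct vertices and pairwise
distinct edges, the `i`-th edge joining the `i`-th and `(i+1)`-th vertices.
(Distinctness of the vertices encodes that every vertex is incident to at most
two of the edges of the circuit.) -/
def IsCircuit (G : Multigraph V E) {n : ℕ} (v : ZMod n → V) (ed : ZMod n → E) : Prop :=
  0 < n ∧ Function.Injective v ∧ Function.Injective ed ∧
    ∀ i, G.Joins (ed i) (v i) (v (i + 1))

/-- Two edges are circuit-connected if some circuit contains both. -/
def CircuitConnected (G : Multigraph V E) (e e' : E) : Prop :=
  ∃ (n : ℕ) (v : ZMod n → V) (ed : ZMod n → E),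
    G.IsCircuit v ed ∧ e ∈ Set.range ed ∧ e' ∈ Set.range ed

end Multigraph

/-!
Split the circuit at `e` and `e'` into two arcs, and let `P` be the one running from the far
end of `e` to the near end of `e'`. Let `Y` be the component of the other arc in `G - P`.
Both `Y` and its complement induce connected subgraphs: `Y` because it is a component, and
`Yᶜ` because every component of `G - P` other than `Y` is attached to the connected set `P`.
So the edges between `Y` and `Yᶜ` form a cut, and `e`, `e'` both run between the two arcs.
-/

open Set

namespace Multigraph

variable {V E : Type*} {G : Multigraph V E}

theorem Joins.symm {f : E} {u w : V} (h : G.Joins f u w) : G.Joins f w u := Or.symm h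

theorem Reach.symm {F : Set E} {u w : V} (h : G.Reach F u w) : G.Reach F w u :=
  Relation.EqvGen.symm _ _ h

theorem Reach.trans {F : Set E} {u w x : V} (h : G.Reach F u w) (h' : G.Reach F w x) :
    G.Reach F u x :=
  Relation.EqvGen.trans _ _ _ h h'

theorem Reach.mono {F F' : Set E} (hFF' : F ⊆ F') {u w : V} (h : G.Reach F u w) :
    G.Reach F' u w :=
  Relation.EqvGen.mono (fun _ _ ⟨f, hf, hj⟩ => ⟨f, hFF' hf, hj⟩) _ _ h

theorem Reach.tail {F : Set E} {u a b : V} {f : E} (h : G.Reach F u a) (hf : f ∈ F)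
    (hj : G.Joins f a b) : G.Reach F u b :=
  h.trans (Relation.EqvGen.rel _ _ ⟨f, hf, hj⟩)

theorem Reach.exists_joins_mem_not_mem {F : Set E} {U : Set V} {u w : V} (h : G.Reach F u w)
    (hu : u ∈ U) (hw : w ∉ U) : ∃ f ∈ F, ∃ a ∈ U, ∃ b ∉ U, G.Joins f a b := by
  by_contra! hclosed
  have hinv : ∀ x y, G.Reach F x y → (x ∈ U ↔ y ∈ U) := by
    intro x y hxy
    induction hxy with
    | rel x y hxy =>
      obtain ⟨f, hf, hj⟩ := hxy
      exact ⟨fun hx => by_contra fun hy => hclosed f hf x hx y hy hj,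
        fun hy => by_contra fun hx => hclosed f hf y hy x hx hj.symm⟩
    | refl => exact Iff.rfl
    | symm _ _ _ ih => exact ih.symm
    | trans _ _ _ _ _ ih ih' => exact ih.trans ih'
  exact hw ((hinv u w h).1 hu)

def edgesIn (G : Multigraph V E) (S : Set V) : Set E := {f | G.fst f ∈ S ∧ G.snd f ∈ S}

def ConnectedOn (G : Multigraph V E) (S : Set V) : Prop :=
  ∀ u ∈ S, ∀ w ∈ S, G.Reach (G.edgesIn S) u w

def edgeBoundary (G : Multigraph V E) (A : Set V) : Set E :=
  {f | ¬(G.fst f ∈ A ↔ G.snd f ∈ A)}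

theorem Joins.mem_edgesIn_iff {f : E} {a b : V} {S : Set V} (hj : G.Joins f a b) :
    f ∈ G.edgesIn S ↔ a ∈ S ∧ b ∈ S := by
  rcases hj with ⟨rfl, rfl⟩ | ⟨rfl, rfl⟩
  exacts [Iff.rfl, and_comm]

theorem edgesIn_mono {S S' : Set V} (h : S ⊆ S') : G.edgesIn S ⊆ G.edgesIn S' :=
  fun _ ⟨h₁, h₂⟩ => ⟨h h₁, h h₂⟩

theorem mem_edgeBoundary_of_joins {f : E} {a b : V} {A : Set V} (hj : G.Joins f a b)
    (ha : a ∈ A) (hb : b ∉ A) : f ∈ G.edgeBoundary A := by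
  rcases hj with ⟨rfl, rfl⟩ | ⟨rfl, rfl⟩ <;> simp only [edgeBoundary, mem_ofPred_eq] <;> tauto

theorem Reach.mem_of_edgesIn {S : Set V} {u w : V} (h : G.Reach (G.edgesIn S) u w)
    (hu : u ∈ S) : w ∈ S := by
  by_contra hw
  obtain ⟨f, hf, a, -, b, hb, hj⟩ := h.exists_joins_mem_not_mem hu hw
  exact hb (hj.mem_edgesIn_iff.1 hf).2

theorem connectedOn_of_forall_reach {S : Set V} {s : V}
    (h : ∀ x ∈ S, G.Reach (G.edgesIn S) s x) : G.ConnectedOn S :=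
  fun u hu w hw => (h u hu).symm.trans (h w hw)

theorem connectedOn_setOf_reach (F : Set E) (y₀ : V) : G.ConnectedOn {y | G.Reach F y₀ y} := by
  set Y := {y | G.Reach F y₀ y}
  refine connectedOn_of_forall_reach (s := y₀) fun y hy => ?_
  by_contra hy'
  obtain ⟨f, hf, a, ha, b, hb, hj⟩ :=
    Reach.exists_joins_mem_not_mem (U := {x | G.Reach (G.edgesIn Y) y₀ x}) hy
      (Relation.EqvGen.refl _) hy'
  have haY : a ∈ Y := Reach.mem_of_edgesIn ha (Relation.EqvGen.refl _)
  have hbY : b ∈ Y := Reach.tail haY hf hj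
  exact hb (Reach.tail ha (hj.mem_edgesIn_iff.2 ⟨haY, hbY⟩) hj)

/-- The components of `G - S` other than this one all hang off the connected set `S`. -/
theorem connectedOn_compl_setOf_reach (hconn : G.Connected) {S : Set V} (hS : G.ConnectedOn S)
    {s y₀ : V} (hs : s ∈ S) (hy₀ : y₀ ∉ S) :
    G.ConnectedOn {y | G.Reach (G.edgesIn Sᶜ) y₀ y}ᶜ := by
  set Y := {y | G.Reach (G.edgesIn Sᶜ) y₀ y}
  set T := {x | G.Reach (G.edgesIn Yᶜ) s x}
  have hYS : ∀ y ∈ Y, y ∉ S := fun y hy => Reach.mem_of_edgesIn (S := Sᶜ) hy hy₀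
  have hSY : S ⊆ Yᶜ := fun x hx hxY => hYS x hxY hx
  have hST : S ⊆ T := fun x hx => (hS s hs x hx).mono (edgesIn_mono hSY)
  have hTY : T ⊆ Yᶜ := fun x hx => Reach.mem_of_edgesIn hx (hSY hs)
  have hcover : ∀ x, x ∈ Y ∪ T := by
    by_contra! ⟨x, hx⟩
    obtain ⟨f, -, a, ha, b, hb, hj⟩ :=
      (hconn s x).exists_joins_mem_not_mem (Or.inr (hST hs)) hx
    rw [mem_union, not_or] at hb
    rcases ha with haY | haT
    · by_cases hbS : b ∈ S
      · exact hb.2 (hST hbS)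
      · exact hb.1 (Reach.tail haY (hj.mem_edgesIn_iff.2 ⟨hYS a haY, hbS⟩) hj)
    · exact hb.2 (Reach.tail haT (hj.mem_edgesIn_iff.2 ⟨hTY haT, hb.1⟩) hj)
  exact connectedOn_of_forall_reach fun x hx => (hcover x).resolve_left hx

theorem compl_edgeBoundary (A : Set V) :
    (G.edgeBoundary A)ᶜ = G.edgesIn A ∪ G.edgesIn Aᶜ := by
  ext f
  simp only [edgeBoundary, edgesIn, mem_compl_iff, mem_union, mem_ofPred_eq]
  tauto

theorem Reach.mem_iff_of_compl_edgeBoundary {A : Set V} {u w : V}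
    (h : G.Reach (G.edgeBoundary A)ᶜ u w) : u ∈ A ↔ w ∈ A := by
  refine ⟨fun hu => by_contra fun hw => ?_, fun hw => by_contra fun hu => ?_⟩
  · obtain ⟨f, hf, a, ha, b, hb, hj⟩ := h.exists_joins_mem_not_mem hu hw
    exact hf (mem_edgeBoundary_of_joins hj ha hb)
  · obtain ⟨f, hf, a, ha, b, hb, hj⟩ := h.symm.exists_joins_mem_not_mem hw hu
    exact hf (mem_edgeBoundary_of_joins hj ha hb)

theorem isCut_edgeBoundary {A : Set V} (hA : A.Nonempty) (hAc : Aᶜ.Nonempty)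
    (hAconn : G.ConnectedOn A) (hAcconn : G.ConnectedOn Aᶜ) : G.IsCut (G.edgeBoundary A) := by
  refine ⟨A, hA, hAc, fun u w => ⟨fun h => ?_, ?_⟩, fun f hf => ?_⟩
  · have := h.mem_iff_of_compl_edgeBoundary
    simp only [mem_compl_iff]
    tauto
  · rw [compl_edgeBoundary]
    rintro (⟨hu, hw⟩ | ⟨hu, hw⟩)
    · exact (hAconn u hu w hw).mono subset_union_left
    · exact (hAcconn u hu w hw).mono subset_union_right
  · simp only [edgeBoundary, mem_ofPred_eq, mem_compl_iff] at hf ⊢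
    tauto

theorem _root_.ZMod.natCast_injOn_Icc_one (n : ℕ) :
    InjOn (Nat.cast : ℕ → ZMod n) (Icc 1 n) := by
  intro s ⟨hs₁, hsn⟩ t ⟨ht₁, htn⟩ hst
  refine ((ZMod.natCast_eq_natCast_iff s t n).1 hst).eq_of_abs_lt ?_
  rw [abs_sub_lt_iff]
  omega

section Circuit

variable {n : ℕ} {v : ZMod n → V} {ed : ZMod n → E}

theorem reach_edgesIn_of_forall_joins (hjoin : ∀ i, G.Joins (ed i) (v i) (v (i + 1)))
    (i : ZMod n) {S : Set V} {a b : ℕ} (hab : a ≤ b) (hS : ∀ t, a ≤ t → t ≤ b → v (i + t) ∈ S) :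
    G.Reach (G.edgesIn S) (v (i + a)) (v (i + b)) := by
  induction b, hab using Nat.le_induction with
  | base => exact Relation.EqvGen.refl _
  | succ t hat ih =>
    have hj : G.Joins (ed (i + t)) (v (i + t)) (v (i + (t + 1 : ℕ))) := by
      simpa [add_assoc] using hjoin (i + t)
    refine Reach.tail (ih fun s has hst => hS s has (by omega)) ?_ hj
    exact hj.mem_edgesIn_iff.2 ⟨hS t hat (by omega), hS (t + 1) (by omega) le_rfl⟩

theorem IsCircuit.exists_isCut (hconn : G.Connected) (hC : G.IsCircuit v ed) {i j : ZMod n}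
    (hij : i ≠ j) : ∃ c : Set E, G.IsCut c ∧ ed i ∈ c ∧ ed j ∈ c := by
  obtain ⟨hn, hv, -, hjoin⟩ := hC
  have : NeZero n := ⟨hn.ne'⟩
  set d := (j - i).val
  have hd₀ : 0 < d := ZMod.val_pos.2 (sub_ne_zero.2 hij.symm)
  have hdn : d < n := ZMod.val_lt _
  have hj : i + (d : ZMod n) = j := by simp [d]
  set w : ℕ → V := fun t => v (i + t)
  set P := w '' Icc 1 d
  have hw : InjOn w (Icc 1 n) :=
    fun s hs t ht hst => ZMod.natCast_injOn_Icc_one n hs ht (add_left_cancel (hv hst))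
  have hwP : ∀ t, d < t → t ≤ n → w t ∉ P := by
    rintro t hdt htn ⟨s, ⟨hs₁, hsd⟩, hst⟩
    have := hw ⟨hs₁, by omega⟩ ⟨by omega, htn⟩ hst
    omega
  have hwn : w n = v i := by simp [w]
  have hP : G.ConnectedOn P := connectedOn_of_forall_reach (s := w 1) <| by
    rintro _ ⟨t, ⟨ht₁, htd⟩, rfl⟩
    exact reach_edgesIn_of_forall_joins hjoin i ht₁ fun s hs₁ hst =>
      ⟨s, ⟨hs₁, hst.trans htd⟩, rfl⟩
  have hviP : v i ∉ P := hwn ▸ hwP n hdn le_rfl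
  set Y := {y | G.Reach (G.edgesIn Pᶜ) (v i) y}
  have hPY : P ⊆ Yᶜ := fun x hx hxY => Reach.mem_of_edgesIn hxY hviP hx
  have hw₁ : w 1 ∈ P := ⟨1, ⟨le_rfl, hd₀⟩, rfl⟩
  have hviY : v i ∈ Y := Relation.EqvGen.refl _
  have hvjY : v (j + 1) ∈ Y := by
    have harc := reach_edgesIn_of_forall_joins hjoin i (S := Pᶜ) hdn hwP
    change G.Reach _ (v i) (v (j + 1))
    simpa [← hj, add_assoc, w] using harc.symm
  refine ⟨G.edgeBoundary Y,
    isCut_edgeBoundary ⟨v i, hviY⟩ ⟨w 1, hPY hw₁⟩ (connectedOn_setOf_reach _ _)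
      (connectedOn_compl_setOf_reach hconn hP hw₁ hviP), ?_, ?_⟩
  · exact mem_edgeBoundary_of_joins (hjoin i) hviY (by simpa [w] using hPY hw₁)
  · refine mem_edgeBoundary_of_joins (hjoin j).symm hvjY ?_
    simpa [← hj, w] using hPY ⟨d, ⟨hd₀, le_rfl⟩, rfl⟩

end Circuit

end Multigraph

theorem stmt_4_general {V E : Type*}
    (G : Multigraph V E) (hconn : G.Connected)
    (e e' : E) (hne : e ≠ e') (hcc : G.CircuitConnected e e') :
    ∃ c : Set E, G.IsCut c ∧ e ∈ c ∧ e' ∈ c := by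
  obtain ⟨n, v, ed, hC, ⟨i, rfl⟩, ⟨j, rfl⟩⟩ := hcc
  exact hC.exists_isCut hconn fun hij => hne (congrArg ed hij)

/-- In a connected graph, any two distinct circuit-connected edges can be
extended to a cut. -/
theorem stmt_4 {V E : Type*} [Fintype V] [Fintype E]
    (G : Multigraph V E) (hconn : G.Connected)
    (e e' : E) (hne : e ≠ e') (hcc : G.CircuitConnected e e') :
    ∃ c : Set E, G.IsCut c ∧ e ∈ c ∧ e' ∈ c :=
  stmt_4_general G hconn e e' hne hcc
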